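/- Let f be a symmetric formal power series in t₁,…,t_d over K and let S_{(1)}(t₁,…,t_d) = t₁+⋯+t_d. Then M'(f·S_{(1)}; v₁,…,v_d) = v₁·M'(f; v₁,…,v_d) + Σ_{i=1}^{d−1} (v_{i+1}/v_i)·(M'(f; v₁,…,v_d) − M'(f; v₁,…,v_{i−1}, 0, v_{i+1},…,v_d)), where for each i the difference M'(f; v₁,…,v_d) − M'(f; v₁,…,v_{i−1}, 0, v_{i+1},…,v_d) is divisible by v_i, so each summand is a well-defined formal power series. -/

import Mathlib

open MvPowerSeries

noncomputable section

/-- The Vandermonde product `∏_{i<j} (t_i - t_j)`. -/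
def vanDet (d : ℕ) : MvPowerSeries (Fin d) ℚ :=
  ∏ p ∈ Finset.univ.filter fun p : Fin d × Fin d => p.1 < p.2,
    (MvPowerSeries.X p.1 - MvPowerSeries.X p.2)

/-- The alternant `det (t_j^{λ_i + d - i})` (with rows indexed by `i` zero-indexed, so the
exponent in row `i` is `λ_i + (d - 1 - i)`). -/
def alternant (d : ℕ) (lam : Fin d → ℕ) : MvPowerSeries (Fin d) ℚ :=
  Matrix.det (Matrix.of fun i j : Fin d =>
    (MvPowerSeries.X j : MvPowerSeries (Fin d) ℚ) ^ (lam i + (d - 1 - (i : ℕ))))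

/-- `S` is the Schur polynomial attached to the partition `λ = (λ₁ ≥ ⋯ ≥ λ_d ≥ 0)`,
characterized by `S · ∏_{i<j}(t_i - t_j) = det(t_j^{λ_i + d - i})`; this determines `S`
uniquely since multivariate power series over `ℚ` form a domain. -/
def IsSchur (d : ℕ) (lam : Fin d → ℕ) (S : MvPowerSeries (Fin d) ℚ) : Prop :=
  S * vanDet d = alternant d lam

/-- `m` is the family of coefficients of the expansion `f = Σ_λ m_λ S_λ` of the symmetric
power series `f` in the Schur family `S`, the sum running over partitions `λ` in at most `d`
parts, i.e. antitone functions `Fin d → ℕ` (coefficientwise, only finitely many partitions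
contribute to each coefficient since `S_λ` is homogeneous of degree `|λ|`). -/
def IsSchurExpansion (d : ℕ) (f : MvPowerSeries (Fin d) ℚ)
    (S : (Fin d → ℕ) → MvPowerSeries (Fin d) ℚ) (m : (Fin d → ℕ) → ℚ) : Prop :=
  ∀ e : Fin d →₀ ℕ,
    MvPowerSeries.coeff e f =
      ∑ᶠ (lam : Fin d → ℕ) (_ : Antitone lam), m lam * MvPowerSeries.coeff e (S lam)

/-- The multiplicity series `M' = Σ_λ m_λ v₁^{λ₁-λ₂} v₂^{λ₂-λ₃} ⋯ v_{d-1}^{λ_{d-1}-λ_d} v_d^{λ_d}`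
in the variables `v₁,…,v_d` (where `v_i = t₁⋯t_i`): the coefficient at the exponent `e` is
`m λ` for the unique partition `λ` with `λ_i - λ_{i+1} = e_i`, i.e. `λ_i = Σ_{j ≥ i} e_j`. -/
def multSeries (d : ℕ) (m : (Fin d → ℕ) → ℚ) : MvPowerSeries (Fin d) ℚ :=
  fun e => m fun i => ∑ j ∈ Finset.univ.filter fun j => i ≤ j, e j

end

noncomputable section

/-- Setting the variable `v_i` to `0` in a power series in `v₁,…,v_d`. -/
def setZero (d : ℕ) (i : Fin d) (M : MvPowerSeries (Fin d) ℚ) : MvPowerSeries (Fin d) ℚ :=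
  fun e => if e i = 0 then MvPowerSeries.coeff e M else 0

/-- Division by the variable `v_i` of a power series all of whose monomials are divisible
by `v_i` (shifting the exponent of `v_i` down by one). -/
def divVar (d : ℕ) (i : Fin d) (M : MvPowerSeries (Fin d) ℚ) : MvPowerSeries (Fin d) ℚ :=
  fun e => MvPowerSeries.coeff (e + Finsupp.single i 1) M

end

/-! Multiplying by the Vandermonde product `Δ = ∏_{i<j} (t_i - t_j)` turns `f = ∑ m_λ S_λ` into
`f Δ = ∑ m_λ a_{λ+δ}` with alternants `a_{λ+δ}`. The only strictly decreasing exponent occurring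
in `a_{λ+δ}` is `λ + δ`, so `m_μ` is the coefficient of `t^(μ+δ)` in `f Δ`, and exponents with a
repeated entry have coefficient `0` in `f Δ`. (These sums are finite because `S_λ` has no monomials
of degree below `|λ|`, by additivity of `order`.) Hence `m'_μ`, the coefficient of `t^(μ+δ)` in
`f Δ (t₁ + ⋯ + t_d)`, is the sum over `k` of the coefficients of `t^(μ+δ-ε_k)` in `f Δ`, which is
`m_{μ-ε_k}` if `μ_k > μ_{k+1}` and `0` otherwise (the exponent then has a repeated or a negative
entry). If `v^e` is the monomial of `μ`, then `μ_k > μ_{k+1}` means `e_k ≥ 1`, and the monomial of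
`μ - ε_k` is `v^e v_{k-1} / v_k`, which is the term that `(v_k / v_{k-1}) (M' - M'|_{v_{k-1} = 0})`
picks out. -/

open Finset Equiv

noncomputable section Alternant

variable {d : ℕ}

/-- The exponent `λ + δ`, where `δ = (d - 1, …, 1, 0)`. -/
def plusDelta (lam : Fin d → ℕ) : Fin d →₀ ℕ :=
  Finsupp.equivFunOnFinite.symm fun i => lam i + (d - 1 - i)

@[simp]
lemma plusDelta_apply (lam : Fin d → ℕ) (i : Fin d) : plusDelta lam i = lam i + (d - 1 - i) :=
  rfl

lemma strictAnti_plusDelta {lam : Fin d → ℕ} (h : Antitone lam) : StrictAnti (plusDelta lam) := by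
  intro i j hij
  have := h hij.le
  have : (i : ℕ) < j := hij
  have := j.isLt
  simp only [plusDelta_apply]
  omega

lemma plusDelta_add_single (lam : Fin d → ℕ) (k : Fin d) :
    plusDelta (lam + Pi.single k 1) = plusDelta lam + Finsupp.single k 1 := by
  ext i
  rcases eq_or_ne i k with rfl | h
  · simp only [plusDelta_apply, Pi.add_apply, Pi.single_eq_same, Finsupp.coe_add,
      Finsupp.single_eq_same]
    omega
  · simp [h]

lemma sum_plusDelta (lam : Fin d → ℕ) :
    ∑ i, plusDelta lam i = ∑ i, lam i + ∑ i : Fin d, (d - 1 - i : ℕ) := by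
  simp only [plusDelta_apply, sum_add_distrib]

lemma alternant_eq_sum (lam : Fin d → ℕ) :
    alternant d lam = ∑ σ : Perm (Fin d),
      Perm.sign σ • monomial (Finsupp.equivFunOnFinite.symm (plusDelta lam ∘ σ)) (1 : ℚ) := by
  rw [alternant, Matrix.det_apply]
  refine sum_congr rfl fun σ _ => ?_
  simp only [Matrix.of_apply, X_pow_eq, prod_monomial, prod_const_one,
    Finsupp.equivFunOnFinite_symm_eq_sum]
  rfl

lemma coeff_alternant (lam : Fin d → ℕ) (a : Fin d →₀ ℕ) :
    coeff a (alternant d lam) =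
      ∑ σ : Perm (Fin d), if ⇑a = plusDelta lam ∘ σ then ((Perm.sign σ : ℤ) : ℚ) else 0 := by
  rw [alternant_eq_sum, map_sum]
  refine sum_congr rfl fun σ _ => ?_
  rw [Units.smul_def, map_zsmul, coeff_monomial, zsmul_eq_mul, mul_ite, mul_one, mul_zero]
  exact if_congr Finsupp.equivFunOnFinite.eq_symm_apply rfl rfl

lemma plusDelta_eq_comp_iff {lam mu : Fin d → ℕ} (hlam : Antitone lam) (hmu : Antitone mu)
    (σ : Perm (Fin d)) : ⇑(plusDelta mu) = plusDelta lam ∘ σ ↔ lam = mu ∧ σ = 1 := by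
  refine ⟨fun h => ?_, by rintro ⟨rfl, rfl⟩; rfl⟩
  have hσ : σ = 1 := by
    have hmono : StrictMono σ := fun a b hab => by
      have := strictAnti_plusDelta hmu hab
      rw [h] at this
      exact (strictAnti_plusDelta hlam).lt_iff_gt.mp this
    exact Perm.ext (congrFun hmono.eq_id)
  subst hσ
  refine ⟨funext fun i => ?_, rfl⟩
  have := congrFun h i
  simp only [plusDelta_apply, Perm.coe_one, Function.comp_apply, id_eq] at this
  omega

lemma coeff_plusDelta_alternant {lam mu : Fin d → ℕ} (hlam : Antitone lam) (hmu : Antitone mu) :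
    coeff (plusDelta mu) (alternant d lam) = if lam = mu then 1 else 0 := by
  rw [coeff_alternant]
  simp_rw [plusDelta_eq_comp_iff hlam hmu]
  by_cases h : lam = mu <;> simp [h]

lemma coeff_alternant_eq_zero {lam : Fin d → ℕ} (hlam : Antitone lam) {a : Fin d →₀ ℕ}
    {i j : Fin d} (hij : i ≠ j) (ha : a i = a j) : coeff a (alternant d lam) = 0 := by
  rw [coeff_alternant]
  refine sum_eq_zero fun σ _ => if_neg fun h => hij ?_
  have : plusDelta lam (σ i) = plusDelta lam (σ j) := by
    simpa [h] using ha
  exact σ.injective ((strictAnti_plusDelta hlam).injective this)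

lemma le_order_alternant (lam : Fin d → ℕ) :
    ((∑ i, lam i + ∑ i : Fin d, (d - 1 - i : ℕ) : ℕ) : ℕ∞) ≤ (alternant d lam).order := by
  refine le_order fun a ha => ?_
  by_contra hne
  rw [coeff_alternant] at hne
  obtain ⟨σ, -, hσ⟩ := exists_ne_zero_of_sum_ne_zero hne
  have h : ⇑a = plusDelta lam ∘ σ := by
    by_contra h
    exact hσ (if_neg h)
  rw [Finsupp.degree_eq_sum, h, ← sum_plusDelta] at ha
  simp only [Function.comp_apply, Equiv.sum_comp σ (plusDelta lam ·), lt_self_iff_false] at ha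

end Alternant

section SchurExpansion

variable {d : ℕ}

lemma card_filter_lt_fst_snd :
    #{p : Fin d × Fin d | p.1 < p.2} = ∑ i : Fin d, (d - 1 - i : ℕ) := by
  rw [card_filter, Fintype.sum_prod_type]
  refine sum_congr rfl fun i _ => ?_
  rw [← card_filter, filter_lt_eq_Ioi, Fin.card_Ioi]

lemma order_vanDet_le : (vanDet d).order ≤ ∑ i : Fin d, (d - 1 - i : ℕ) := by
  have h_factor : ∀ i j : Fin d, i ≠ j → ((X i : MvPowerSeries (Fin d) ℚ) - X j).order ≤ 1 := by
    intro i j hij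
    have := order_le (f := (X i : MvPowerSeries (Fin d) ℚ) - X j) (d := Finsupp.single i 1)
      (by simp [coeff_X, Finsupp.single_left_inj one_ne_zero, hij])
    simpa using this
  calc (vanDet d).order
      ≤ ∑ _p ∈ univ.filter fun p : Fin d × Fin d => p.1 < p.2, (1 : ℕ∞) := by
        rw [vanDet, order_prod]
        exact sum_le_sum fun _ hp => h_factor _ _ (mem_filter.mp hp).2.ne
    _ = _ := by simp [card_filter_lt_fst_snd]

lemma IsSchur.sum_le_degree {lam : Fin d → ℕ} {S : MvPowerSeries (Fin d) ℚ}
    (hS : IsSchur d lam S) {b : Fin d →₀ ℕ} (hb : coeff b S ≠ 0) :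
    ∑ i, lam i ≤ b.degree := by
  have h : ((∑ i, lam i + ∑ i : Fin d, (d - 1 - i : ℕ) : ℕ) : ℕ∞) ≤
      ((b.degree + ∑ i : Fin d, (d - 1 - i : ℕ) : ℕ) : ℕ∞) :=
    calc _ ≤ (alternant d lam).order := le_order_alternant lam
      _ = S.order + (vanDet d).order := by rw [← hS, order_mul]
      _ ≤ _ := by rw [Nat.cast_add]; exact add_le_add (order_le hb) order_vanDet_le
  have := Nat.cast_le.mp h
  omega

open Classical in
def boundedPartitions (d n : ℕ) : Finset (Fin d → ℕ) :=
  (Fintype.piFinset fun _ => Iic n).filter Antitone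

lemma mem_boundedPartitions {n : ℕ} {lam : Fin d → ℕ} :
    lam ∈ boundedPartitions d n ↔ Antitone lam ∧ ∀ i, lam i ≤ n := by
  simp [boundedPartitions, and_comm]

variable {f : MvPowerSeries (Fin d) ℚ} {S : (Fin d → ℕ) → MvPowerSeries (Fin d) ℚ}
  {m : (Fin d → ℕ) → ℚ}

lemma IsSchurExpansion.coeff_eq_sum (hS : ∀ lam, Antitone lam → IsSchur d lam (S lam))
    (hm : IsSchurExpansion d f S m) {b : Fin d →₀ ℕ} {n : ℕ} (hb : b.degree ≤ n) :
    coeff b f = ∑ lam ∈ boundedPartitions d n, m lam * coeff b (S lam) := by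
  rw [hm b]
  refine finsum_cond_eq_sum_of_cond_iff _ fun {lam} hne => ?_
  rw [mem_boundedPartitions]
  refine ⟨fun hlam => ⟨hlam, fun i => ?_⟩, And.left⟩
  calc lam i ≤ ∑ j, lam j := single_le_sum (fun _ _ => Nat.zero_le _) (mem_univ i)
    _ ≤ b.degree := (hS lam hlam).sum_le_degree (right_ne_zero_of_mul hne)
    _ ≤ n := hb

lemma IsSchurExpansion.coeff_mul_vanDet (hS : ∀ lam, Antitone lam → IsSchur d lam (S lam))
    (hm : IsSchurExpansion d f S m) (a : Fin d →₀ ℕ) :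
    coeff a (f * vanDet d) =
      ∑ lam ∈ boundedPartitions d a.degree, m lam * coeff a (alternant d lam) := by
  calc coeff a (f * vanDet d)
      = ∑ p ∈ antidiagonal a, ∑ lam ∈ boundedPartitions d a.degree,
          m lam * (coeff p.1 (S lam) * coeff p.2 (vanDet d)) := by
        rw [coeff_mul]
        refine sum_congr rfl fun p hp => ?_
        have hdeg : p.1.degree ≤ a.degree := by
          rw [← mem_antidiagonal.mp hp, map_add]
          exact Nat.le_add_right _ _
        simp only [hm.coeff_eq_sum hS hdeg, sum_mul, mul_assoc]
    _ = _ := by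
        rw [sum_comm]
        refine sum_congr rfl fun lam hlam => ?_
        rw [← mul_sum, ← coeff_mul, hS lam (mem_boundedPartitions.mp hlam).1]

lemma IsSchurExpansion.coeff_plusDelta_mul_vanDet
    (hS : ∀ lam, Antitone lam → IsSchur d lam (S lam)) (hm : IsSchurExpansion d f S m)
    {mu : Fin d → ℕ} (hmu : Antitone mu) : coeff (plusDelta mu) (f * vanDet d) = m mu := by
  rw [hm.coeff_mul_vanDet hS]
  have hmem : mu ∈ boundedPartitions d (plusDelta mu).degree := by
    refine mem_boundedPartitions.mpr ⟨hmu, fun i => ?_⟩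
    calc mu i ≤ plusDelta mu i := Nat.le_add_right _ _
      _ ≤ (plusDelta mu).degree := Finsupp.le_degree i _
  rw [sum_eq_single_of_mem mu hmem fun lam hlam hne => ?_]
  · rw [coeff_plusDelta_alternant hmu hmu, if_pos rfl, mul_one]
  · rw [coeff_plusDelta_alternant (mem_boundedPartitions.mp hlam).1 hmu, if_neg hne, mul_zero]

lemma IsSchurExpansion.coeff_mul_vanDet_eq_zero
    (hS : ∀ lam, Antitone lam → IsSchur d lam (S lam)) (hm : IsSchurExpansion d f S m)
    {a : Fin d →₀ ℕ} {i j : Fin d} (hij : i ≠ j) (ha : a i = a j) :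
    coeff a (f * vanDet d) = 0 := by
  rw [hm.coeff_mul_vanDet hS]
  refine sum_eq_zero fun lam hlam => ?_
  rw [coeff_alternant_eq_zero (mem_boundedPartitions.mp hlam).1 hij ha, mul_zero]

end SchurExpansion

section MultSeries

variable {d : ℕ}

lemma coeff_X_mul (k : Fin d) (g : MvPowerSeries (Fin d) ℚ) (e : Fin d →₀ ℕ) :
    coeff e (X k * g) =
      if Finsupp.single k 1 ≤ e then coeff (e - Finsupp.single k 1) g else 0 := by
  rw [X_def, coeff_monomial_mul, one_mul]

lemma coeff_mul_X (k : Fin d) (g : MvPowerSeries (Fin d) ℚ) (e : Fin d →₀ ℕ) :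
    coeff e (g * X k) =
      if Finsupp.single k 1 ≤ e then coeff (e - Finsupp.single k 1) g else 0 := by
  rw [X_def, coeff_mul_monomial, mul_one]

lemma coeff_sub_setZero (i : Fin d) (M : MvPowerSeries (Fin d) ℚ) (a : Fin d →₀ ℕ) :
    coeff a (M - setZero d i M) = if a i = 0 then 0 else coeff a M := by
  rw [map_sub]
  change _ - (if a i = 0 then coeff a M else 0) = _
  split_ifs <;> simp

lemma coeff_divVar (i : Fin d) (M : MvPowerSeries (Fin d) ℚ) (a : Fin d →₀ ℕ) :
    coeff a (divVar d i M) = coeff (a + Finsupp.single i 1) M :=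
  rfl

lemma X_mul_divVar_sub_setZero (i : Fin d) (M : MvPowerSeries (Fin d) ℚ) :
    X i * divVar d i (M - setZero d i M) = M - setZero d i M := by
  ext e
  rw [coeff_X_mul, coeff_sub_setZero]
  by_cases hzero : e i = 0
  · rw [if_neg (by simp [Finsupp.single_le_iff, hzero]), if_pos hzero]
  · have hle : Finsupp.single i 1 ≤ e :=
      Finsupp.single_le_iff.mpr (Nat.one_le_iff_ne_zero.mpr hzero)
    rw [if_pos hle, if_neg hzero, coeff_divVar, tsub_add_cancel_of_le hle, coeff_sub_setZero,
      if_neg hzero]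

def partitionOf (e : Fin d →₀ ℕ) : Fin d → ℕ :=
  fun i => ∑ j ∈ univ.filter fun j => i ≤ j, e j

lemma coeff_multSeries (m : (Fin d → ℕ) → ℚ) (e : Fin d →₀ ℕ) :
    coeff e (multSeries d m) = m (partitionOf e) :=
  rfl

lemma antitone_partitionOf (e : Fin d →₀ ℕ) : Antitone (partitionOf e) :=
  fun _ _ hij => sum_le_sum_of_subset fun _ hx => by
    simp only [mem_filter, mem_univ, true_and] at hx ⊢
    exact hij.trans hx

lemma partitionOf_add (a b : Fin d →₀ ℕ) : partitionOf (a + b) = partitionOf a + partitionOf b :=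
  funext fun _ => sum_add_distrib

lemma partitionOf_single (k : Fin d) :
    partitionOf (Finsupp.single k 1) = fun i => if i ≤ k then 1 else 0 := by
  funext i
  simp [partitionOf, Finsupp.single_apply, sum_ite_eq]

lemma partitionOf_apply (e : Fin d →₀ ℕ) (i : Fin d) : partitionOf e i = ∑ j ∈ Ici i, e j := by
  rw [partitionOf, filter_le_eq_Ici]

lemma partitionOf_last {n : ℕ} (e : Fin (n + 1) →₀ ℕ) :
    partitionOf e (Fin.last n) = e (Fin.last n) := by
  have : Ici (Fin.last n) = {Fin.last n} := by
    ext j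
    simp [Fin.last_le_iff]
  rw [partitionOf_apply, this, sum_singleton]

lemma partitionOf_castSucc {n : ℕ} (e : Fin (n + 1) →₀ ℕ) (i : Fin n) :
    partitionOf e i.castSucc = e i.castSucc + partitionOf e i.succ := by
  have : Ioi i.castSucc = Ici i.succ := by
    ext j
    simp [Fin.castSucc_lt_iff_succ_le]
  rw [partitionOf_apply, partitionOf_apply, Ici_eq_cons_Ioi, sum_cons, this]

lemma coeff_plusDelta_mul_X {F : MvPowerSeries (Fin d) ℚ} {m : (Fin d → ℕ) → ℚ}
    (hF : ∀ mu, Antitone mu → coeff (plusDelta mu) F = m mu) {a e : Fin d →₀ ℕ} {k : Fin d}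
    (h : partitionOf a + Pi.single k 1 = partitionOf e) :
    coeff (plusDelta (partitionOf e)) (F * X k) = m (partitionOf a) := by
  rw [← h, plusDelta_add_single, X_def, coeff_add_mul_monomial, mul_one,
    hF _ (antitone_partitionOf a)]

lemma coeff_plusDelta_mul_X_of_eq_zero {n : ℕ} {F : MvPowerSeries (Fin (n + 1)) ℚ}
    (hF0 : ∀ a : Fin (n + 1) →₀ ℕ, ∀ i j, i ≠ j → a i = a j → coeff a F = 0)
    (e : Fin (n + 1) →₀ ℕ) (k : Fin (n + 1)) (hk : e k = 0) :
    coeff (plusDelta (partitionOf e)) (F * X k) = 0 := by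
  rw [coeff_mul_X]
  split_ifs with hle
  · rw [Finsupp.single_le_iff] at hle
    induction k using Fin.lastCases with
    | last => simp [partitionOf_last, hk] at hle
    | cast j =>
      -- `e_k = 0` means `λ_k = λ_{k+1}`, so `λ + δ - ε_k` has equal entries at `k` and `k + 1`
      refine hF0 _ _ _ (Fin.castSucc_lt_succ (i := j)).ne ?_
      simp [partitionOf_castSucc, hk, (Fin.castSucc_lt_succ (i := j)).ne']
      omega
  · rfl

lemma coeff_X_zero_mul_multSeries {n : ℕ} {F : MvPowerSeries (Fin (n + 1)) ℚ}
    {m : (Fin (n + 1) → ℕ) → ℚ} (hF : ∀ mu, Antitone mu → coeff (plusDelta mu) F = m mu)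
    (hF0 : ∀ a : Fin (n + 1) →₀ ℕ, ∀ i j, i ≠ j → a i = a j → coeff a F = 0)
    (e : Fin (n + 1) →₀ ℕ) :
    coeff e (X 0 * multSeries (n + 1) m) = coeff (plusDelta (partitionOf e)) (F * X 0) := by
  rw [coeff_X_mul]
  by_cases he : e 0 = 0
  · rw [if_neg (by simp [Finsupp.single_le_iff, he]),
      coeff_plusDelta_mul_X_of_eq_zero hF0 e 0 he]
  · have hle : Finsupp.single 0 1 ≤ e :=
      Finsupp.single_le_iff.mpr (Nat.one_le_iff_ne_zero.mpr he)
    rw [if_pos hle, coeff_multSeries, coeff_plusDelta_mul_X hF]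
    conv_rhs => rw [← tsub_add_cancel_of_le hle, partitionOf_add, partitionOf_single]
    congr 1
    funext i
    simp [Pi.single_apply]

lemma coeff_X_succ_mul_divVar {n : ℕ} {F : MvPowerSeries (Fin (n + 1)) ℚ}
    {m : (Fin (n + 1) → ℕ) → ℚ} (hF : ∀ mu, Antitone mu → coeff (plusDelta mu) F = m mu)
    (hF0 : ∀ a : Fin (n + 1) →₀ ℕ, ∀ i j, i ≠ j → a i = a j → coeff a F = 0)
    (e : Fin (n + 1) →₀ ℕ) (i : Fin n) :
    coeff e (X i.succ * divVar (n + 1) i.castSucc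
        (multSeries (n + 1) m - setZero (n + 1) i.castSucc (multSeries (n + 1) m))) =
      coeff (plusDelta (partitionOf e)) (F * X i.succ) := by
  rw [coeff_X_mul]
  by_cases he : e i.succ = 0
  · rw [if_neg (by simp [Finsupp.single_le_iff, he]),
      coeff_plusDelta_mul_X_of_eq_zero hF0 e _ he]
  · have hle : Finsupp.single i.succ 1 ≤ e :=
      Finsupp.single_le_iff.mpr (Nat.one_le_iff_ne_zero.mpr he)
    rw [if_pos hle, coeff_divVar, coeff_sub_setZero, if_neg (by simp), coeff_multSeries,
      coeff_plusDelta_mul_X hF]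
    conv_rhs => rw [← tsub_add_cancel_of_le hle]
    rw [partitionOf_add, partitionOf_add, add_assoc, partitionOf_single, partitionOf_single]
    congr 1
    funext x
    rcases lt_trichotomy x i.succ with h | rfl | h
    · simp [Fin.le_castSucc_iff.mpr h, h.le, h.ne]
    · simp [Fin.le_castSucc_iff]
    · simp [Fin.le_castSucc_iff, not_lt.mpr h.le, not_le.mpr h, h.ne']

end MultSeries

/-- branching rule for multiplicity series. For `f` symmetric with Schur
expansion `m` and `f·S_{(1)}` with Schur expansion `m'` (where `S_{(1)} = t₁+⋯+t_d`):
`M'(f·S_{(1)}) = v₁·M'(f) + Σ_{i=1}^{d-1} (v_{i+1}/v_i)·(M'(f) - M'(f)|_{v_i:=0})`,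
each difference `M'(f) - M'(f)|_{v_i:=0}` being divisible by `v_i`. -/
theorem stmt9 (d : ℕ) (hd : 1 ≤ d) (f : MvPowerSeries (Fin d) ℚ)
    (S : (Fin d → ℕ) → MvPowerSeries (Fin d) ℚ)
    (hS : ∀ lam : Fin d → ℕ, Antitone lam → IsSchur d lam (S lam))
    (m m' : (Fin d → ℕ) → ℚ)
    (hm : IsSchurExpansion d f S m)
    (hm' : IsSchurExpansion d
      (f * ∑ i : Fin d, (MvPowerSeries.X i : MvPowerSeries (Fin d) ℚ)) S m') :
    (∀ i : Fin d,
      MvPowerSeries.X i *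
          divVar d i (multSeries d m - setZero d i (multSeries d m)) =
        multSeries d m - setZero d i (multSeries d m)) ∧
    multSeries d m' =
      MvPowerSeries.X (⟨0, by omega⟩ : Fin d) * multSeries d m +
        ∑ i : Fin (d - 1),
          MvPowerSeries.X (⟨(i : ℕ) + 1, by have := i.isLt; omega⟩ : Fin d) *
            divVar d (⟨(i : ℕ), by have := i.isLt; omega⟩ : Fin d)
              (multSeries d m -
                setZero d (⟨(i : ℕ), by have := i.isLt; omega⟩ : Fin d) (multSeries d m)) := by
  obtain ⟨n, rfl⟩ : ∃ n, d = n + 1 := ⟨d - 1, by omega⟩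
  refine ⟨fun i => X_mul_divVar_sub_setZero i _, ?_⟩
  have hF := fun mu => hm.coeff_plusDelta_mul_vanDet hS (mu := mu)
  have hF0 := fun a i j => hm.coeff_mul_vanDet_eq_zero hS (a := a) (i := i) (j := j)
  ext e
  rw [map_add, map_sum, coeff_multSeries,
    ← hm'.coeff_plusDelta_mul_vanDet hS (antitone_partitionOf e), mul_right_comm, mul_sum,
    map_sum, Fin.sum_univ_succ]
  exact congrArg₂ (· + ·) (coeff_X_zero_mul_multSeries hF hF0 e).symm
    (sum_congr rfl fun i _ => (coeff_X_succ_mul_divVar hF hF0 e i).symm)
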